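/- arXiv:2505.20352 — 5 statements merged into one kernel-verified Lean document; each statement's English description precedes it below -/
import Mathlib

section
/- Let $s, t, p, n$ be integers and $n_1 \geq n_2 \geq \cdots \geq n_t \geq p \geq 1$ be integers with $\sum_{i=1}^{t} n_i = n - s$. If $n_1 < n - s - p(t-1)$, then $e(K_s \vee (K_{n_1} \cup K_{n_2} \cup \cdots \cup K_{n_t})) < e(K_s \vee (K_{n-s-p(t-1)} \cup (t-1)K_p))$. -/
/-!
Summing `deg v + 1` over the vertices of `K_s ∨ (K_{n₁} ∪ ⋯ ∪ K_{n_t})` gives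
`2e + s + N = s(s + N) + sN + ∑ nᵢ²` with `N = ∑ nᵢ`, so for fixed `s` and `N` the edge count
grows with `∑ nᵢ²`. Put `a = N - p(t-1)`. From `p ≤ nᵢ ≤ n₁ < a` we get
`nᵢ² - p² = (nᵢ - p)(nᵢ + p) ≤ (nᵢ - p)(n₁ + p)`, and summing,
`∑ nᵢ² - tp² ≤ (a - p)(n₁ + p) < (a - p)(a + p) = a² + (t-1)p² - tp²`,
where `a² + (t-1)p²` is the sum of squares of the part sizes `(a, p, …, p)`.
-/

open SimpleGraph Finset

/-- The number of edges of a simple graph. -/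
noncomputable def eCard {V : Type*} (G : SimpleGraph V) : ℕ := Nat.card G.edgeSet

/-- The number of connected components of `G - S`, the subgraph of `G` induced on the
complement of `S`. -/
noncomputable def numCompDel {V : Type*} (G : SimpleGraph V) (S : Set V) : ℕ :=
  Nat.card (G.induce Sᶜ).ConnectedComponent

/-- `G` has the `k`-strong parity property: for every vertex subset `X` of even size, `G`
contains a spanning subgraph `F` whose degrees are odd on `X` and even and at least `k`
outside `X`. -/
def KStrongParity {V : Type*} [Fintype V] (k : ℕ) (G : SimpleGraph V) : Prop :=
  ∀ X : Finset V, Even X.card → ∃ F : SimpleGraph V, F ≤ G ∧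
    (∀ u ∈ X, Odd (Nat.card (F.neighborSet u))) ∧
    (∀ v, v ∉ X → Even (Nat.card (F.neighborSet v)) ∧ k ≤ Nat.card (F.neighborSet v))

/-- The join `K_s ∨ (K_{n 0} ∪ K_{n 1} ∪ ⋯ ∪ K_{n (t-1)})` of a complete graph `K_s` with a
disjoint union of complete graphs of sizes `n 0, …, n (t-1)`. -/
def GJoin (s : ℕ) {t : ℕ} (n : Fin t → ℕ) :
    SimpleGraph (Fin s ⊕ Σ i : Fin t, Fin (n i)) where
  Adj u v := u ≠ v ∧ (u.isLeft ∨ v.isLeft ∨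
    ∃ i : Fin t, (∃ a, u = Sum.inr ⟨i, a⟩) ∧ (∃ b, v = Sum.inr ⟨i, b⟩))
  symm := by
    constructor
    rintro u v ⟨h1, h2⟩
    refine ⟨h1.symm, ?_⟩
    rcases h2 with h | h | ⟨i, ha, hb⟩
    · exact Or.inr (Or.inl h)
    · exact Or.inl h
    · exact Or.inr (Or.inr ⟨i, hb, ha⟩)
  loopless := by constructor; rintro u ⟨h, -⟩; exact h rfl

/-- The graph `K_s ∨ (K_a ∪ m K_p)`. -/
def KJmix (s a m p : ℕ) :
    SimpleGraph (Fin s ⊕ Σ i : Fin (m + 1), Fin ((Fin.cons a (fun _ => p) : Fin (m+1) → ℕ) i)) :=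
  GJoin s (Fin.cons a (fun _ => p) : Fin (m+1) → ℕ)

/-- The signless Laplacian spectral radius of `G`: the largest eigenvalue of
`Q(G) = D(G) + A(G)`. -/
noncomputable def qSpec {V : Type*} [Fintype V] [DecidableEq V] (G : SimpleGraph V)
    [DecidableRel G.Adj] : ℝ :=
  sSup {x : ℝ | Module.End.HasEigenvalue
    (Matrix.toLin' (Matrix.diagonal (fun v => (G.degree v : ℝ)) + G.adjMatrix ℝ)) x}

theorem SimpleGraph.degree_add_one_eq_card_filter {V : Type*} [Fintype V] [DecidableEq V]
    (G : SimpleGraph V) [DecidableRel G.Adj] (v : V) :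
    G.degree v + 1 = #{w | v = w ∨ G.Adj v w} := by
  rw [filter_or, filter_eq, ← neighborFinset_eq_filter, if_pos (mem_univ v),
    card_union_of_disjoint (by simp), card_singleton, degree, add_comm]

theorem Finset.sum_sq_lt_of_mem_Icc {ι R : Type*} [CommRing R] [LinearOrder R]
    [IsStrictOrderedRing R] {s : Finset ι} {f : ι → R} {p b a : R} (hs : s.Nonempty)
    (hf : ∀ i ∈ s, f i ∈ Set.Icc p b) (hba : b < a)
    (hsum : ∑ i ∈ s, f i = a + (#s - 1) * p) :
    ∑ i ∈ s, f i ^ 2 < a ^ 2 + (#s - 1) * p ^ 2 := by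
  obtain ⟨j, hj⟩ := hs
  have hpa : p < a := (hf j hj).1.trans_lt ((hf j hj).2.trans_lt hba)
  calc ∑ i ∈ s, f i ^ 2 = ∑ i ∈ s, (f i ^ 2 - p ^ 2) + #s * p ^ 2 := by
        simp [sum_sub_distrib]
    _ ≤ ∑ i ∈ s, (f i - p) * (b + p) + #s * p ^ 2 := by
        gcongr with i hi
        obtain ⟨hpf, hfb⟩ := hf i hi
        nlinarith [mul_le_mul_of_nonneg_left (add_le_add_right hfb p) (sub_nonneg.2 hpf)]
    _ = (a - p) * (b + p) + #s * p ^ 2 := by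
        rw [← sum_mul, sum_sub_distrib, hsum, sum_const, nsmul_eq_mul]
        ring
    _ < (a - p) * (a + p) + #s * p ^ 2 := by
        gcongr
    _ = a ^ 2 + (#s - 1) * p ^ 2 := by ring

namespace GJoin

variable {s t : ℕ} {n : Fin t → ℕ}

theorem eq_or_adj_iff {u v : Fin s ⊕ Σ i : Fin t, Fin (n i)} :
    u = v ∨ (GJoin s n).Adj u v ↔ u.isLeft ∨ v.isLeft ∨
      ∃ i : Fin t, (∃ a, u = Sum.inr ⟨i, a⟩) ∧ ∃ b, v = Sum.inr ⟨i, b⟩ := by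
  by_cases huv : u = v
  · subst huv
    rcases u with u | ⟨i, a⟩ <;> simp
  · simp [GJoin, huv]

section
variable [DecidableRel (GJoin s n).Adj]

theorem degree_inl_add_one (u : Fin s) :
    (GJoin s n).degree (Sum.inl u) + 1 = s + ∑ i, n i := by
  rw [degree_add_one_eq_card_filter, filter_true_of_mem fun w _ => eq_or_adj_iff.2 (by simp)]
  simp [Fintype.card_sigma]

theorem degree_inr_add_one (i : Fin t) (a : Fin (n i)) :
    (GJoin s n).degree (Sum.inr ⟨i, a⟩) + 1 = s + n i := by
  have : ({w | Sum.inr ⟨i, a⟩ = w ∨ (GJoin s n).Adj (Sum.inr ⟨i, a⟩) w} : Finset _) =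
      univ.disjSum (({i} : Finset (Fin t)).sigma fun _ => univ) := by
    ext w
    rw [mem_filter, eq_or_adj_iff]
    rcases w with w | ⟨j, b⟩ <;> aesop
  rw [degree_add_one_eq_card_filter, this, card_disjSum, card_sigma]
  simp

end

theorem two_mul_eCard_add_card :
    2 * eCard (GJoin s n) + (s + ∑ i, n i) =
      s * (s + ∑ i, n i) + s * ∑ i, n i + ∑ i, n i ^ 2 := by
  classical
  have hV : Fintype.card (Fin s ⊕ Σ i : Fin t, Fin (n i)) = s + ∑ i, n i := by
    simp [Fintype.card_sigma]
  calc 2 * eCard (GJoin s n) + (s + ∑ i, n i) = ∑ v, ((GJoin s n).degree v + 1) := by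
        rw [sum_add_distrib, sum_degrees_eq_twice_card_edges, eCard, Nat.card_eq_fintype_card,
          ← edgeFinset_card, sum_const, card_univ, hV, smul_eq_mul, mul_one]
    _ = s * (s + ∑ i, n i) + s * ∑ i, n i + ∑ i, n i ^ 2 := by
        rw [Fintype.sum_sum_type, ← univ_sigma_univ, sum_sigma, mul_sum, add_assoc,
          ← sum_add_distrib]
        simp [degree_inl_add_one, degree_inr_add_one, sq, mul_add, mul_comm]

theorem eCard_lt_eCard_of_sum_sq_lt {t' : ℕ} {m : Fin t' → ℕ} (hsum : ∑ i, n i = ∑ i, m i)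
    (hsq : ∑ i, n i ^ 2 < ∑ i, m i ^ 2) : eCard (GJoin s n) < eCard (GJoin s m) := by
  have hn := two_mul_eCard_add_card (s := s) (n := n)
  have hm := two_mul_eCard_add_card (s := s) (n := m)
  rw [hsum] at hn
  omega

end GJoin

theorem edge_count_compression_general (s p n t : ℕ) (ht : 1 ≤ t) (nseq : Fin t → ℕ)
    (hmono : ∀ i j : Fin t, i ≤ j → nseq j ≤ nseq i)
    (hp : ∀ i, p ≤ nseq i)
    (hsum : ∑ i, (nseq i : ℤ) = (n : ℤ) - s)
    (h1 : (nseq ⟨0, ht⟩ : ℤ) < (n : ℤ) - s - p * ((t : ℤ) - 1)) :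
    eCard (GJoin s nseq) < eCard (KJmix s (n - s - p * (t - 1)) (t - 1) p) := by
  set a := n - s - p * (t - 1)
  -- `h1` makes `n - s - p(t-1)` positive, so none of the truncated subtractions in `a` truncates.
  have ha : (a : ℤ) = n - s - p * ((t : ℤ) - 1) := by
    have hq : ((p * (t - 1) : ℕ) : ℤ) = p * ((t : ℤ) - 1) := by
      push_cast [Nat.cast_sub ht]
      ring
    omega
  have hsum' : ∑ i, (nseq i : ℤ) = a + ((t : ℤ) - 1) * p := by
    rw [hsum, ha]
    ring
  have hsq := sum_sq_lt_of_mem_Icc ⟨⟨0, ht⟩, mem_univ _⟩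
    (fun i _ => ⟨Int.ofNat_le.2 (hp i), Int.ofNat_le.2 (hmono _ i (Nat.zero_le _))⟩)
    (h1.trans_eq ha.symm) (by simpa using hsum')
  rw [card_fin] at hsq
  refine GJoin.eCard_lt_eCard_of_sum_sq_lt ?_ ?_ <;>
    simp only [Fin.sum_univ_succ, Fin.cons_zero, Fin.cons_succ, sum_const, card_univ,
      Fintype.card_fin, smul_eq_mul] <;>
    zify [ht] <;>
    linarith

/-- **Lemma 2.1 (Zheng–Li–Luo–Wang).** If `n₁ ≥ n₂ ≥ ⋯ ≥ n_t ≥ p ≥ 1`, `∑ nᵢ = n - s` and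
`n₁ < n - s - p(t-1)`, then
`e(K_s ∨ (K_{n₁} ∪ ⋯ ∪ K_{n_t})) < e(K_s ∨ (K_{n-s-p(t-1)} ∪ (t-1)K_p))`. -/
theorem edge_count_compression (s p n t : ℕ) (ht : 1 ≤ t) (nseq : Fin t → ℕ)
    (hmono : ∀ i j : Fin t, i ≤ j → nseq j ≤ nseq i)
    (hp : ∀ i, p ≤ nseq i) (hp1 : 1 ≤ p)
    (hsum : ∑ i, (nseq i : ℤ) = (n : ℤ) - s)
    (h1 : (nseq ⟨0, ht⟩ : ℤ) < (n : ℤ) - s - p * ((t : ℤ) - 1)) :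
    eCard (GJoin s nseq) < eCard (KJmix s (n - s - p * (t - 1)) (t - 1) p) :=
  edge_count_compression_general s p n t ht nseq hmono hp hsum h1
end

section
/- Let $G$ be a finite simple graph of order $n \geq 2$. Then $q(G) \leq \frac{2e(G)}{n-1} + n - 2$, where $q(G)$ is the signless Laplacian spectral radius of $G$ and $e(G)$ is the number of edges of $G$. -/
/-!
With `z_v = max d_v 1`, the signless Laplacian satisfies `(Q z)_v = d_v² + Σ_{w ∼ v} d_w`, and
Das's inequality bounds this by `B z_v` with `B = 2e/(n-1) + n - 2`; for a nonnegative matrix, a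
positive vector with `Q z ≤ B z` bounds every eigenvalue by `B` (Collatz–Wielandt).

Das's inequality: put `N = N(v)`, `R = V ∖ N[v]` and `r = |R|`. A neighbour `w` of `v` has at most
`d_v` neighbours in `N[v]`, so `Σ_{w ∈ N} d_w ≤ d_v² + b` with `b` the number of `N`–`R` edges;
a vertex `x ∈ R` has at most `min(d_v, d_x)` neighbours in `N`, which gives
`r b ≤ d_v (D + r (r - 1))` with `D = Σ_{x ∈ R} d_x`. As `2e = d_v + Σ_{w ∈ N} d_w + D`, the
inequality is then linear arithmetic.
-/

open SimpleGraph Finset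

namespace Matrix

variable {ι : Type*} [Fintype ι] [DecidableEq ι]

theorem abs_le_of_hasEigenvalue_of_mulVec_le {M : Matrix ι ι ℝ} (hM : ∀ i j, 0 ≤ M i j)
    {z : ι → ℝ} (hz : ∀ i, 0 < z i) {B : ℝ} (hMz : ∀ i, (M *ᵥ z) i ≤ B * z i)
    {μ : ℝ} (hμ : Module.End.HasEigenvalue (toLin' M) μ) : |μ| ≤ B := by
  obtain ⟨x, hx⟩ := hμ.exists_hasEigenvector
  have hMx : M *ᵥ x = μ • x := by rw [← toLin'_apply]; exact hx.apply_eq_smul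
  obtain ⟨i, hi⟩ := Function.ne_iff.mp hx.2
  obtain ⟨v, -, hv⟩ := exists_max_image univ (fun j => |x j| / z j) ⟨i, mem_univ i⟩
  set c := |x v| / z v
  have hxc : ∀ j, |x j| ≤ c * z j := fun j =>
    (div_le_iff₀ (hz j)).mp (hv j (mem_univ j))
  have hc : 0 < c := (div_pos (abs_pos.mpr hi) (hz i)).trans_le (hv i (mem_univ i))
  have key : |μ| * (c * z v) ≤ B * (c * z v) :=
    calc |μ| * (c * z v) = |(M *ᵥ x) v| := by
          rw [hMx, Pi.smul_apply, smul_eq_mul, abs_mul, div_mul_cancel₀ _ (hz v).ne']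
      _ ≤ ∑ j, M v j * |x j| := by
          refine (abs_sum_le_sum_abs _ _).trans_eq (sum_congr rfl fun j _ => ?_)
          rw [abs_mul, abs_of_nonneg (hM v j)]
      _ ≤ ∑ j, M v j * (c * z j) := by gcongr with j; exacts [hM v j, hxc j]
      _ = c * (M *ᵥ z) v := by simp only [mulVec, dotProduct, mul_sum, mul_left_comm c]
      _ ≤ c * (B * z v) := by gcongr; exact hMz v
      _ = B * (c * z v) := by ring
  exact le_of_mul_le_mul_right key (mul_pos hc (hz v))

end Matrix

namespace SimpleGraph

open scoped Matrix

variable {V : Type*} [Fintype V] [DecidableEq V] (G : SimpleGraph V) [DecidableRel G.Adj]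

def signlessLapMatrix (R : Type*) [AddMonoidWithOne R] : Matrix V V R :=
  Matrix.diagonal (fun v => (G.degree v : R)) + G.adjMatrix R

theorem signlessLapMatrix_nonneg {R : Type*} [Semiring R] [PartialOrder R] [IsOrderedRing R]
    (u v : V) : 0 ≤ G.signlessLapMatrix R u v := by
  unfold signlessLapMatrix
  rw [Matrix.add_apply, Matrix.diagonal_apply, adjMatrix_apply]
  exact add_nonneg (by split_ifs <;> positivity) (by split_ifs <;> simp)

theorem signlessLapMatrix_mulVec_apply {R : Type*} [NonAssocSemiring R] (z : V → R) (v : V) :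
    (G.signlessLapMatrix R *ᵥ z) v = G.degree v * z v + ∑ w ∈ G.neighborFinset v, z w := by
  rw [signlessLapMatrix, Matrix.add_mulVec, Pi.add_apply, Matrix.mulVec_diagonal,
    adjMatrix_mulVec_apply]

theorem degree_add_one_le_card_add_card_filter_compl {w : V} {T : Finset V} (hw : w ∈ T) :
    G.degree w + 1 ≤ #T + #{x ∈ Tᶜ | G.Adj w x} := by
  have hsplit : G.degree w = #{x ∈ T | G.Adj w x} + #{x ∈ Tᶜ | G.Adj w x} := by
    rw [← card_neighborFinset_eq_degree, neighborFinset_eq_filter, card_filter, card_filter,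
      card_filter, sum_add_sum_compl]
  have hT : #{x ∈ T | G.Adj w x} ≤ #(T.erase w) :=
    card_le_card fun x hx => by
      rw [mem_filter] at hx
      exact mem_erase.mpr ⟨hx.2.ne', hx.1⟩
  have := card_erase_add_one hw
  omega

theorem sum_degree_neighborFinset_le (v : V) :
    ∑ w ∈ G.neighborFinset v, G.degree w ≤ G.degree v * G.degree v
      + ∑ x ∈ (insert v (G.neighborFinset v))ᶜ, #{w ∈ G.neighborFinset v | G.Adj w x} := by
  have hT : #(insert v (G.neighborFinset v)) = G.degree v + 1 :=
    card_insert_of_notMem (G.notMem_neighborFinset_self v)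
  have hdeg_nbr : ∀ w ∈ G.neighborFinset v,
      G.degree w ≤ G.degree v + #{x ∈ (insert v (G.neighborFinset v))ᶜ | G.Adj w x} := by
    intro w hw
    have h := G.degree_add_one_le_card_add_card_filter_compl
      (T := insert v (G.neighborFinset v)) (mem_insert_of_mem hw)
    rw [hT, add_right_comm] at h
    exact Nat.le_of_add_le_add_right h
  refine (sum_le_sum hdeg_nbr).trans_eq ?_
  rw [sum_add_distrib, sum_const, smul_eq_mul, card_neighborFinset_eq_degree]
  exact congrArg _ (sum_card_bipartiteAbove_eq_sum_card_bipartiteBelow G.Adj)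

/-- Das's inequality `d_v + m_v ≤ 2e/(n-1) + n - 2`, where `m_v` is the average degree of the
neighbours of `v`, with denominators cleared. -/
theorem card_sub_one_mul_degree_sq_add_sum_degree_le (v : V) :
    ((Fintype.card V : ℝ) - 1)
        * ((G.degree v : ℝ) ^ 2 + ∑ w ∈ G.neighborFinset v, (G.degree w : ℝ))
      ≤ (2 * #G.edgeFinset + ((Fintype.card V : ℝ) - 2) * ((Fintype.card V : ℝ) - 1))
        * G.degree v := by
  set d := G.degree v
  set N := G.neighborFinset v
  set R := (insert v N)ᶜ
  have hcard : #R + d + 1 = Fintype.card V := by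
    have := G.degree_lt_card_verts v
    rw [card_compl, card_insert_of_notMem (G.notMem_neighborFinset_self v),
      card_neighborFinset_eq_degree]
    omega
  have handshake : d + ∑ w ∈ N, G.degree w + ∑ x ∈ R, G.degree x = 2 * #G.edgeFinset := by
    rw [← sum_degrees_eq_twice_card_edges, ← sum_add_sum_compl (insert v N),
      sum_insert (G.notMem_neighborFinset_self v)]
  have hcodeg : ∀ x ∈ R, #R * #{w ∈ N | G.Adj w x} + d ≤ d * G.degree x + d * #R := by
    intro x hx
    have hcd : #{w ∈ N | G.Adj w x} ≤ d := card_filter_le _ _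
    have hcx : #{w ∈ N | G.Adj w x} ≤ G.degree x :=
      card_le_card fun w hw => by simpa [adj_comm] using (mem_filter.mp hw).2
    have hr : 1 ≤ #R := card_pos.mpr ⟨x, hx⟩
    nlinarith [Nat.le_mul_self #{w ∈ N | G.Adj w x}]
  have he : (2 * #G.edgeFinset : ℝ)
      = d + ∑ w ∈ N, (G.degree w : ℝ) + ∑ x ∈ R, (G.degree x : ℝ) := by
    exact_mod_cast handshake.symm
  have hS : ∑ w ∈ N, (G.degree w : ℝ)
      ≤ d * d + ∑ x ∈ R, (#{w ∈ N | G.Adj w x} : ℝ) := by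
    exact_mod_cast G.sum_degree_neighborFinset_le v
  have hb : (#R : ℝ) * ∑ x ∈ R, (#{w ∈ N | G.Adj w x} : ℝ) + #R * d
      ≤ d * ∑ x ∈ R, (G.degree x : ℝ) + d * (#R * #R) := by
    have h := sum_le_sum hcodeg
    simp only [sum_add_distrib, ← mul_sum, sum_const, smul_eq_mul] at h
    exact_mod_cast h
  rw [← hcard, he]
  push_cast
  nlinarith [mul_le_mul_of_nonneg_left hS (Nat.cast_nonneg (α := ℝ) #R)]

theorem signlessLapMatrix_mulVec_le (hV : 2 ≤ Fintype.card V) (u : V) :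
    (G.signlessLapMatrix ℝ *ᵥ fun w => max (G.degree w : ℝ) 1) u ≤
      (2 * #G.edgeFinset / ((Fintype.card V : ℝ) - 1) + Fintype.card V - 2)
        * max (G.degree u : ℝ) 1 := by
  have hn : (2 : ℝ) ≤ Fintype.card V := by exact_mod_cast hV
  set n : ℝ := (Fintype.card V : ℝ)
  set d : ℝ := (G.degree u : ℝ)
  have hn1 : 0 < n - 1 := by linarith
  have hB : 0 ≤ 2 * #G.edgeFinset / (n - 1) + n - 2 := by
    have : 0 ≤ 2 * (#G.edgeFinset : ℝ) / (n - 1) := div_nonneg (by positivity) hn1.le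
    linarith
  have hnbr : ∑ w ∈ G.neighborFinset u, max (G.degree w : ℝ) 1
      = ∑ w ∈ G.neighborFinset u, (G.degree w : ℝ) :=
    sum_congr rfl fun w hw => max_eq_left <| Nat.one_le_cast.mpr <|
      (G.degree_pos_iff_exists_adj w).mpr ⟨u, ((G.mem_neighborFinset u w).mp hw).symm⟩
  have hdiag : d * max d 1 = d ^ 2 := by
    rcases Nat.eq_zero_or_pos (G.degree u) with h | h
    · simp [d, h]
    · rw [max_eq_left (Nat.one_le_cast.mpr h), sq]
  have hdas : d ^ 2 + ∑ w ∈ G.neighborFinset u, (G.degree w : ℝ)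
      ≤ (2 * #G.edgeFinset / (n - 1) + n - 2) * d := by
    rw [show 2 * (#G.edgeFinset : ℝ) / (n - 1) + n - 2
        = (2 * #G.edgeFinset + (n - 2) * (n - 1)) / (n - 1) by field_simp; ring,
      div_mul_eq_mul_div, le_div_iff₀ hn1, mul_comm]
    exact G.card_sub_one_mul_degree_sq_add_sum_degree_le u
  calc (G.signlessLapMatrix ℝ *ᵥ fun w => max (G.degree w : ℝ) 1) u
      = d ^ 2 + ∑ w ∈ G.neighborFinset u, (G.degree w : ℝ) := by
        rw [signlessLapMatrix_mulVec_apply, hnbr, hdiag]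
    _ ≤ (2 * #G.edgeFinset / (n - 1) + n - 2) * d := hdas
    _ ≤ (2 * #G.edgeFinset / (n - 1) + n - 2) * max d 1 := by gcongr; exact le_max_left _ _

end SimpleGraph

/-- **Lemma 3.1 (Das).** For a graph `G` of order `n ≥ 2`,
`q(G) ≤ 2e(G)/(n-1) + n - 2`. -/
theorem das_signless_laplacian_bound {V : Type*} [Fintype V] [DecidableEq V]
    (G : SimpleGraph V) [DecidableRel G.Adj] (n : ℕ) (hn : Fintype.card V = n)
    (hn2 : 2 ≤ n) :
    qSpec G ≤ 2 * (eCard G : ℝ) / ((n : ℝ) - 1) + (n : ℝ) - 2 := by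
  subst hn
  have hE : (eCard G : ℝ) = #G.edgeFinset := by
    rw [eCard, Nat.card_eq_fintype_card, card_edgeSet]
  have hB : 0 ≤ 2 * (eCard G : ℝ) / ((Fintype.card V : ℝ) - 1) + Fintype.card V - 2 := by
    have hn : (2 : ℝ) ≤ Fintype.card V := by exact_mod_cast hn2
    have : 0 ≤ 2 * (eCard G : ℝ) / (Fintype.card V - 1) :=
      div_nonneg (by positivity) (by linarith)
    linarith
  refine Real.sSup_le (fun μ hμ => ?_) hB
  rw [hE]
  exact (le_abs_self μ).trans <| Matrix.abs_le_of_hasEigenvalue_of_mulVec_le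
    G.signlessLapMatrix_nonneg (fun _ => lt_max_of_lt_right one_pos)
    (G.signlessLapMatrix_mulVec_le hn2) hμ
end

section
/- Let $k, \delta, n$ be integers with $k \geq 2$, $\delta \geq k+1$ and $n \geq \frac{(\delta^2+(2-k)\delta-2k-1)^2}{6(\delta-k)} + \delta + k + 1$. Define $f(x) = (\delta-k)^2 x^3 - (\delta-k)(\delta^2+(2-k)\delta-2k-1)x^2 + (\delta-k)(2n-2\delta-k-4)x - 2(\delta-k-1)n + \delta^3 + (2-2k)\delta^2 + (k^2-2k+1)\delta - 3k - 2$. Then $f(x) > 0$ for all real $x$ with $1 \leq x \leq \delta$. -/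
/-- The cubic polynomial `f` appearing in the proof of Theorem 1.2. -/
noncomputable def fpoly (k δ n : ℤ) : ℝ → ℝ := fun x =>
  ((δ : ℝ) - k) ^ 2 * x ^ 3
    - ((δ : ℝ) - k) * ((δ : ℝ) ^ 2 + (2 - (k : ℝ)) * δ - 2 * k - 1) * x ^ 2
    + ((δ : ℝ) - k) * (2 * n - 2 * δ - k - 4) * x
    - 2 * ((δ : ℝ) - k - 1) * n + (δ : ℝ) ^ 3 + (2 - 2 * (k : ℝ)) * δ ^ 2
    + ((k : ℝ) ^ 2 - 2 * k + 1) * δ - 3 * k - 2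

/-- If `k ≥ 2`, `δ ≥ k + 1` and `n ≥ ((δ²+(2-k)δ-2k-1)²)/(6(δ-k)) + δ + k + 1`, then
`f(x) > 0` for all real `x` with `1 ≤ x ≤ δ`. -/
theorem fpoly_pos (k δ n : ℤ) (hk : 2 ≤ k) (hδ : k + 1 ≤ δ)
    (hn : (((δ : ℝ) ^ 2 + (2 - (k : ℝ)) * δ - 2 * k - 1) ^ 2) / (6 * ((δ : ℝ) - k))
      + δ + k + 1 ≤ (n : ℝ)) :
    ∀ x : ℝ, 1 ≤ x → x ≤ (δ : ℝ) → 0 < fpoly k δ n x := by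
  intro x hx1 hxd
  have hδ' : (k : ℝ) + 1 ≤ (δ : ℝ) := by exact_mod_cast hδ
  have hk2 : (2 : ℝ) ≤ (k : ℝ) := by exact_mod_cast hk
  have ha : (1 : ℝ) ≤ (δ : ℝ) - k := by linarith
  have ha0 : (0 : ℝ) < (δ : ℝ) - k := by linarith
  have hE : (0 : ℝ) ≤ (δ : ℝ) - k - 1 := by linarith
  have hM : (0 : ℝ) ≤ (k : ℝ) - 2 := by linarith
  -- abbreviations (as plain equalities)
  have h6a : (0 : ℝ) < 6 * ((δ : ℝ) - k) := by linarith
  -- B² ≤ 6a(n - δ - k - 1)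
  have hB2 : (((δ : ℝ) ^ 2 + (2 - (k : ℝ)) * δ - 2 * k - 1) ^ 2)
      ≤ 6 * ((δ : ℝ) - k) * ((n : ℝ) - δ - k - 1) := by
    have h1 : (((δ : ℝ) ^ 2 + (2 - (k : ℝ)) * δ - 2 * k - 1) ^ 2) / (6 * ((δ : ℝ) - k))
        ≤ (n : ℝ) - δ - k - 1 := by linarith
    have := (div_le_iff₀ h6a).mp h1
    linarith [this]
  -- B² ≤ 3a·D  where D = 2n - 2δ - k - 4
  have hB3 : (((δ : ℝ) ^ 2 + (2 - (k : ℝ)) * δ - 2 * k - 1) ^ 2)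
      ≤ 3 * ((δ : ℝ) - k) * (2 * (n : ℝ) - 2 * δ - k - 4) := by
    nlinarith [hB2, mul_nonneg ha0.le hM]
  -- positivity of f at 1
  have hf1 : 0 < fpoly k δ n 1 := by
    have key : 0 < 3 * ((δ : ℝ) - k) * fpoly k δ n 1 := by
      unfold fpoly
      nlinarith [hB2, hE, hM, mul_nonneg hE hM, mul_nonneg hE hE, mul_nonneg hM hM,
        mul_nonneg (mul_nonneg hE hE) hM, mul_nonneg hE (mul_nonneg hM hM),
        mul_nonneg (mul_nonneg hE hE) (mul_nonneg hM hM),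
        mul_nonneg (mul_nonneg hE hE) hE,
        mul_nonneg (mul_nonneg (mul_nonneg hE hE) hE) hM,
        mul_nonneg (mul_nonneg hE hE) (mul_nonneg hE hE)]
    by_contra h
    push_neg at h
    nlinarith [key, mul_nonpos_of_nonneg_of_nonpos (by linarith : (0:ℝ) ≤ 3 * ((δ:ℝ) - k)) h]
  -- the quadratic factor r(x) is nonnegative
  have hr : 0 ≤ ((δ : ℝ) - k) * x ^ 2
      + (((δ : ℝ) - k) - ((δ : ℝ) ^ 2 + (2 - (k : ℝ)) * δ - 2 * k - 1)) * x
      + (((δ : ℝ) - k) - ((δ : ℝ) ^ 2 + (2 - (k : ℝ)) * δ - 2 * k - 1)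
          + (2 * (n : ℝ) - 2 * δ - k - 4)) := by
    have h12 : 0 ≤ 12 * ((δ : ℝ) - k) * (((δ : ℝ) - k) * x ^ 2
        + (((δ : ℝ) - k) - ((δ : ℝ) ^ 2 + (2 - (k : ℝ)) * δ - 2 * k - 1)) * x
        + (((δ : ℝ) - k) - ((δ : ℝ) ^ 2 + (2 - (k : ℝ)) * δ - 2 * k - 1)
            + (2 * (n : ℝ) - 2 * δ - k - 4))) := by
      linarith [sq_nonneg (2 * ((δ : ℝ) - k) * x + ((δ : ℝ) - k)
          - ((δ : ℝ) ^ 2 + (2 - (k : ℝ)) * δ - 2 * k - 1)),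
        sq_nonneg (3 * ((δ : ℝ) - k) - ((δ : ℝ) ^ 2 + (2 - (k : ℝ)) * δ - 2 * k - 1)), hB3]
    by_contra h
    push_neg at h
    nlinarith [h12, mul_neg_of_pos_of_neg (by linarith : (0:ℝ) < 12 * ((δ:ℝ) - k)) h]
  -- decomposition f(x) = f(1) + (x-1)·a·r(x)
  have hsplit : fpoly k δ n x = fpoly k δ n 1
      + (x - 1) * (((δ : ℝ) - k) * (((δ : ℝ) - k) * x ^ 2
      + (((δ : ℝ) - k) - ((δ : ℝ) ^ 2 + (2 - (k : ℝ)) * δ - 2 * k - 1)) * x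
      + (((δ : ℝ) - k) - ((δ : ℝ) ^ 2 + (2 - (k : ℝ)) * δ - 2 * k - 1)
          + (2 * (n : ℝ) - 2 * δ - k - 4)))) := by
    unfold fpoly; ring
  rw [hsplit]
  have : 0 ≤ (x - 1) * (((δ : ℝ) - k) * (((δ : ℝ) - k) * x ^ 2
      + (((δ : ℝ) - k) - ((δ : ℝ) ^ 2 + (2 - (k : ℝ)) * δ - 2 * k - 1)) * x
      + (((δ : ℝ) - k) - ((δ : ℝ) ^ 2 + (2 - (k : ℝ)) * δ - 2 * k - 1)
          + (2 * (n : ℝ) - 2 * δ - k - 4)))) :=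
    mul_nonneg (by linarith) (mul_nonneg ha0.le hr)
  linarith
end

section
/- Let $k \geq 2$ be an integer and let $G$ be a finite simple graph of order $n \geq \frac{2k+3+\sqrt{8k^2-8k+1}}{2}$ with $2e(G) \leq kn - 2$. Then $q(G) < 2(n-2) + \frac{2k-2}{n-1}$, where $q(G)$ is the signless Laplacian spectral radius of $G$. -/
open SimpleGraph Finset

/-!
Every eigenvalue of `Q(G)` is at most `max_u (d_u + ∑_{v ∼ u} (d_v + 1) / (d_u + 1))`: this is
Gershgorin's theorem for the similar matrix `diag(d + 1)⁻¹ Q(G) diag(d + 1)`. The numerator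
`∑_{v ∼ u} (d_v + 1)` is at most both `d_u n` and `2e(G) ≤ kn - 2`, which leaves a one-variable
inequality in `d = d_u ∈ [0, n - 1]`; it holds once `n` is at least
`(2k + 3 + √(8k² - 8k + 1))/2`, the larger root of `n² - (2k + 3)n - k² + 5k + 2`.
-/

lemma quadratic_nonneg_of_threshold_le {k n : ℝ} (hk : 2 ≤ k)
    (hn : (2 * k + 3 + Real.sqrt (8 * k ^ 2 - 8 * k + 1)) / 2 ≤ n) :
    2 * k + 3 ≤ 2 * n ∧ 0 ≤ n ^ 2 - (2 * k + 3) * n - k ^ 2 + 5 * k + 2 := by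
  set s := Real.sqrt (8 * k ^ 2 - 8 * k + 1)
  have hs : s ^ 2 = 8 * k ^ 2 - 8 * k + 1 := Real.sq_sqrt (by nlinarith)
  have hs0 : 0 ≤ s := Real.sqrt_nonneg _
  refine ⟨by linarith, ?_⟩
  nlinarith [mul_nonneg (by linarith : 0 ≤ 2 * n - (2 * k + 3) - s)
    (by linarith : 0 ≤ 2 * n - (2 * k + 3) + s)]

lemma add_div_add_one_lt_of_quadratic_nonneg {k n d T : ℝ} (hk : 2 ≤ k)
    (hn : 2 * k + 3 ≤ 2 * n) (hq : 0 ≤ n ^ 2 - (2 * k + 3) * n - k ^ 2 + 5 * k + 2)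
    (hd : 0 ≤ d) (hdn : d ≤ n - 1) (hTd : T ≤ d * n) (hTk : T ≤ k * n - 2) :
    d + T / (d + 1) < 2 * (n - 2) + (2 * k - 2) / (n - 1) := by
  have hn1 : 0 < n - 1 := by linarith
  have hT : T * (n - 1) < ((2 * (n - 2) - d) * (n - 1) + 2 * k - 2) * (d + 1) := by
    rcases le_total d k with h | h
    · nlinarith [mul_nonneg hd (sub_nonneg.2 h), mul_nonneg hd hd, sq_nonneg (n - 1 - d),
        mul_nonneg (sub_nonneg.2 h) (sub_nonneg.2 hdn), mul_nonneg hd (sub_nonneg.2 hdn)]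
    · nlinarith [mul_nonneg (sub_nonneg.2 h) (sub_nonneg.2 hdn), mul_nonneg hd hd,
        mul_nonneg hd (sub_nonneg.2 hdn), sq_nonneg (n - 1 - d)]
  calc d + T / (d + 1) < d + ((2 * (n - 2) - d) * (n - 1) + 2 * k - 2) / (n - 1) := by
        rw [add_lt_add_iff_left, div_lt_div_iff₀ (by linarith) hn1]
        linarith
    _ = 2 * (n - 2) + (2 * k - 2) / (n - 1) := by field_simp; ring

namespace Matrix

variable {ι : Type*} [Fintype ι] [DecidableEq ι]

theorem hasEigenvalue_diagonal_inv_mul_mul_diagonal {A : Matrix ι ι ℝ} {c : ι → ℝ}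
    (hc : ∀ i, c i ≠ 0) {μ : ℝ} (hμ : Module.End.HasEigenvalue (toLin' A) μ) :
    Module.End.HasEigenvalue (toLin' (diagonal c⁻¹ * A * diagonal c)) μ := by
  obtain ⟨x, hx⟩ := hμ.exists_hasEigenvector
  have hAx : A *ᵥ x = μ • x := by simpa using hx.apply_eq_smul
  refine Module.End.hasEigenvalue_of_hasEigenvector (x := c⁻¹ * x) ⟨?_, ?_⟩
  · have hcx : diagonal c *ᵥ (c⁻¹ * x) = x := by
      ext i
      simp [mulVec_diagonal, hc i]
    have hx' : diagonal c⁻¹ *ᵥ x = c⁻¹ * x := by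
      ext i
      simp [mulVec_diagonal]
    rw [Module.End.mem_eigenspace_iff, toLin'_apply, ← mulVec_mulVec, ← mulVec_mulVec, hcx, hAx,
      mulVec_smul, hx']
  · intro h
    apply hx.2
    ext i
    simpa [hc i] using congrFun h i

theorem exists_le_diag_add_weighted_sum {A : Matrix ι ι ℝ} {c : ι → ℝ} (hc : ∀ i, 0 < c i)
    {μ : ℝ} (hμ : Module.End.HasEigenvalue (toLin' A) μ) :
    ∃ i, μ ≤ A i i + ∑ j ∈ univ.erase i, |A i j| * c j / c i := by
  obtain ⟨i, hi⟩ := eigenvalue_mem_ball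
    (hasEigenvalue_diagonal_inv_mul_mul_diagonal (fun i => (hc i).ne') hμ)
  refine ⟨i, ?_⟩
  have hii : (diagonal c⁻¹ * A * diagonal c) i i = A i i := by
    simp only [diagonal_mul, mul_diagonal, Pi.inv_apply]
    field_simp [(hc i).ne']
  have hij : ∀ j, ‖(diagonal c⁻¹ * A * diagonal c) i j‖ = |A i j| * c j / c i := by
    intro j
    simp only [mul_diagonal, diagonal_mul, Pi.inv_apply, norm_mul, norm_inv, Real.norm_eq_abs,
      abs_of_pos (hc i), abs_of_pos (hc j)]
    ring
  rw [Metric.mem_closedBall, hii, Real.dist_eq] at hi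
  simp only [hij] at hi
  linarith [le_abs_self (μ - A i i)]

end Matrix

namespace SimpleGraph

variable {V : Type*} [Fintype V] (G : SimpleGraph V) [DecidableRel G.Adj]

noncomputable def signlessVertexBound (u : V) : ℝ :=
  G.degree u + (∑ v ∈ G.neighborFinset u, (G.degree v + 1) : ℕ) / ((G.degree u : ℝ) + 1)

theorem sum_neighborFinset_degree_add_one_le_mul_card (u : V) :
    ∑ v ∈ G.neighborFinset u, (G.degree v + 1) ≤ G.degree u * Fintype.card V := by
  rw [← card_neighborFinset_eq_degree, ← smul_eq_mul, ← sum_const]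
  exact sum_le_sum fun v _ => G.degree_lt_card_verts v

theorem sum_neighborFinset_degree_add_one_le_two_mul_card_edgeFinset [DecidableEq V] (u : V) :
    ∑ v ∈ G.neighborFinset u, (G.degree v + 1) ≤ 2 * #G.edgeFinset := by
  have hu : u ∉ G.neighborFinset u := by simp
  calc ∑ v ∈ G.neighborFinset u, (G.degree v + 1)
      = ∑ v ∈ insert u (G.neighborFinset u), G.degree v := by
        rw [sum_insert hu, sum_add_distrib, sum_const, smul_eq_mul, mul_one,
          card_neighborFinset_eq_degree, add_comm]
    _ ≤ ∑ v, G.degree v := sum_le_sum_of_subset (subset_univ _)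
    _ = 2 * #G.edgeFinset := G.sum_degrees_eq_twice_card_edges

variable [DecidableEq V]

theorem exists_le_signlessVertexBound {μ : ℝ}
    (hμ : Module.End.HasEigenvalue (Matrix.toLin' (G.degMatrix ℝ + G.adjMatrix ℝ)) μ) :
    ∃ u, μ ≤ G.signlessVertexBound u := by
  obtain ⟨u, hu⟩ := Matrix.exists_le_diag_add_weighted_sum
    (c := fun v => (G.degree v : ℝ) + 1) (fun v => by positivity) hμ
  refine ⟨u, hu.trans_eq ?_⟩
  have hoff : ∀ v ∈ univ.erase u, |(G.degMatrix ℝ + G.adjMatrix ℝ) u v| =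
      if v ∈ G.neighborFinset u then 1 else 0 := by
    intro v hv
    simp [degMatrix, Matrix.diagonal_apply_ne _ (ne_of_mem_erase hv).symm, adjMatrix_apply,
      apply_ite]
  rw [signlessVertexBound, sum_congr rfl fun v hv => by rw [hoff v hv], ← sum_div]
  have hdiag : (G.degMatrix ℝ + G.adjMatrix ℝ) u u = G.degree u := by simp [degMatrix]
  rw [hdiag, sum_erase univ (by simp)]
  simp_rw [boole_mul, sum_ite_mem, univ_inter]
  push_cast
  rfl

theorem qSpec_le_sup'_signlessVertexBound [Nonempty V] :
    qSpec G ≤ univ.sup' univ_nonempty G.signlessVertexBound := by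
  obtain ⟨u⟩ := ‹Nonempty V›
  refine Real.sSup_le (fun μ hμ => ?_) ?_
  · obtain ⟨v, hv⟩ := G.exists_le_signlessVertexBound hμ
    exact hv.trans (le_sup' _ (mem_univ v))
  · exact (by unfold signlessVertexBound; positivity : 0 ≤ G.signlessVertexBound u).trans
      (le_sup' _ (mem_univ u))

end SimpleGraph

/-- If `k ≥ 2`, `G` has order `n ≥ (2k + 3 + √(8k² - 8k + 1))/2` and `2e(G) ≤ kn - 2`,
then `q(G) < 2(n - 2) + (2k - 2)/(n - 1)`. -/
theorem qSpec_lt_of_few_edges (k : ℕ) (hk : 2 ≤ k)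
    {V : Type*} [Fintype V] [DecidableEq V] (G : SimpleGraph V) [DecidableRel G.Adj]
    (n : ℕ) (hn : Fintype.card V = n)
    (hn2 : (2 * (k : ℝ) + 3 + Real.sqrt (8 * (k : ℝ) ^ 2 - 8 * k + 1)) / 2 ≤ (n : ℝ))
    (he : 2 * (eCard G : ℤ) ≤ k * n - 2) :
    qSpec G < 2 * ((n : ℝ) - 2) + (2 * (k : ℝ) - 2) / ((n : ℝ) - 1) := by
  have hk' : (2 : ℝ) ≤ k := by exact_mod_cast hk
  obtain ⟨hkn, hq⟩ := quadratic_nonneg_of_threshold_le hk' hn2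
  have : Nonempty V := by
    rw [← Fintype.card_pos_iff, hn]
    exact_mod_cast (by linarith : (0 : ℝ) < n)
  have hE : 2 * (#G.edgeFinset : ℝ) ≤ k * n - 2 := by
    rw [eCard, Nat.card_eq_fintype_card, card_edgeSet] at he
    exact_mod_cast he
  refine G.qSpec_le_sup'_signlessVertexBound.trans_lt ((sup'_lt_iff _).2 fun u _ => ?_)
  have hdu : (G.degree u : ℝ) ≤ n - 1 := by
    have := G.degree_lt_card_verts u
    rw [hn] at this
    rw [le_sub_iff_add_le]
    exact_mod_cast this
  refine add_div_add_one_lt_of_quadratic_nonneg hk' hkn hq (by positivity) hdu ?_ ?_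
  · rw [← hn]
    exact_mod_cast G.sum_neighborFinset_degree_add_one_le_mul_card u
  · calc _ ≤ 2 * (#G.edgeFinset : ℝ) := by
          exact_mod_cast G.sum_neighborFinset_degree_add_one_le_two_mul_card_edgeFinset u
      _ ≤ _ := hE
end

section
/- Let $k \geq 2$ be an integer and let $G$ be a finite simple graph of order $n$ with a nonempty subset $S \subseteq V(G)$ such that, writing $s = |S|$ and $t = c(G-S)$, one has $t \geq 1$ and $t \geq \sum_{v \in S} d_G(v) - ks + 2$. Then $2e(G) \leq (n-s-t)(n-s-t+1) + 2t + 2ks - 4$. -/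
open SimpleGraph Finset

/-!
Split the degree sum of `G` at `S`. There are at most `∑_{v ∈ S} d(v)` edges between `S` and
`G - S`, so `2e(G) ≤ 2 ∑_{v ∈ S} d(v) + 2e(G - S)`, and the
hypothesis bounds `2 ∑_{v ∈ S} d(v)` by `2t + 2ks - 4`. A graph on `m` vertices with `t`
components has degree sum at most `(m - t)(m - t + 1)`: a component of order `a` contributes
at most `a(a - 1)`, and the numbers `a - 1` add up to `m - t`.
-/

theorem Finset.sum_mul_add_one_le_sum_mul_sum_add_one {ι R : Type*} [Semiring R] [PartialOrder R]
    [IsOrderedRing R] (s : Finset ι) {a : ι → R} (ha : ∀ i ∈ s, 0 ≤ a i) :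
    ∑ i ∈ s, a i * (a i + 1) ≤ (∑ i ∈ s, a i) * (∑ i ∈ s, a i + 1) := by
  rw [sum_mul]
  exact sum_le_sum fun i hi =>
    mul_le_mul_of_nonneg_left (add_le_add_left (single_le_sum ha hi) 1) (ha i hi)

namespace SimpleGraph

theorem sum_degree_le_card_sub_card_connectedComponent {W : Type*} [Fintype W] (H : SimpleGraph W)
    [DecidableRel H.Adj] :
    (∑ v, H.degree v : ℤ) ≤ ((Fintype.card W : ℤ) - Nat.card H.ConnectedComponent) *
      ((Fintype.card W : ℤ) - Nat.card H.ConnectedComponent + 1) := by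
  classical
  have : Fintype H.ConnectedComponent := Fintype.ofFinite _
  set f : H.ConnectedComponent → ℕ := fun c => #{v | H.connectedComponentMk v = c}
  have degree_lt (v : W) : H.degree v < f (H.connectedComponentMk v) := by
    refine card_lt_card ⟨fun u hu => ?_, fun h => ?_⟩
    · simpa using (ConnectedComponent.eq.mpr ((H.mem_neighborFinset v u).mp hu).reachable).symm
    · have hv : v ∈ ({u | H.connectedComponentMk u = H.connectedComponentMk v} : Finset W) := by
        simp
      simpa using h hv
  have sum_f : ∑ c, (f c : ℤ) = Fintype.card W := by
    exact_mod_cast (card_eq_sum_card_fiberwise (fun v _ => mem_univ _)).symm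
  have f_pos (c : H.ConnectedComponent) : 1 ≤ f c := by
    obtain ⟨v, rfl⟩ := c.exists_rep
    exact Nat.one_le_of_lt (degree_lt v)
  calc (∑ v, H.degree v : ℤ)
      ≤ ∑ v, ((f (H.connectedComponentMk v) : ℤ) - 1) :=
        sum_le_sum fun v _ => by have := degree_lt v; omega
    _ = ∑ c, ((f c : ℤ) - 1) * (((f c : ℤ) - 1) + 1) := by
        rw [← sum_fiberwise univ H.connectedComponentMk]
        refine sum_congr rfl fun c _ => ?_
        rw [sum_congr rfl fun v hv => by rw [(mem_filter.mp hv).2], sum_const,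
          sub_add_cancel, nsmul_eq_mul, mul_comm]
    _ ≤ (∑ c, ((f c : ℤ) - 1)) * (∑ c, ((f c : ℤ) - 1) + 1) :=
        sum_mul_add_one_le_sum_mul_sum_add_one _ fun c _ => by have := f_pos c; omega
    _ = _ := by
        rw [sum_sub_distrib, sum_f, Nat.card_eq_fintype_card]
        simp

theorem sum_degree_compl_le {V : Type*} [Fintype V] [DecidableEq V] (G : SimpleGraph V)
    [DecidableRel G.Adj] (S : Finset V) :
    ∑ v ∈ Sᶜ, G.degree v ≤ ∑ u ∈ S, G.degree u +
      ∑ x : ((S : Set V)ᶜ : Set V), (G.induce (S : Set V)ᶜ).degree x := by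
  have degree_induce (x : ((S : Set V)ᶜ : Set V)) :
      (G.induce (S : Set V)ᶜ).degree x = #(G.neighborFinset x ∩ Sᶜ) := by
    rw [← card_neighborFinset_eq_degree, ← card_map, map_neighborFinset_induce]
    simp
  have cross : ∑ v ∈ Sᶜ, #(G.neighborFinset v ∩ S) ≤ ∑ u ∈ S, G.degree u :=
    calc ∑ v ∈ Sᶜ, #(G.neighborFinset v ∩ S)
        = ∑ v ∈ Sᶜ, #(S.bipartiteAbove G.Adj v) := by
          refine sum_congr rfl fun v _ => congrArg card ?_
          ext; simp [bipartiteAbove, and_comm]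
      _ = ∑ u ∈ S, #(Sᶜ.bipartiteBelow G.Adj u) :=
          sum_card_bipartiteAbove_eq_sum_card_bipartiteBelow _
      _ ≤ ∑ u ∈ S, G.degree u := sum_le_sum fun u _ =>
          (card_le_card fun v hv => by simp_all [bipartiteBelow, adj_comm]).trans_eq
            (card_neighborFinset_eq_degree G u)
  calc ∑ v ∈ Sᶜ, G.degree v
      = ∑ v ∈ Sᶜ, (#(G.neighborFinset v ∩ S) + #(G.neighborFinset v ∩ Sᶜ)) := by
        refine sum_congr rfl fun v _ => ?_
        rw [← card_neighborFinset_eq_degree, ← sdiff_eq_inter_compl, card_inter_add_card_sdiff]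
    _ ≤ _ := by
        simp only [sum_add_distrib, degree_induce]
        rw [sum_subtype (p := (· ∈ ((S : Set V)ᶜ : Set V))) Sᶜ (by simp)
          (fun v => #(G.neighborFinset v ∩ Sᶜ))]
        exact Nat.add_le_add_right cross _

end SimpleGraph

theorem two_eCard_le_general (k : ℕ)
    {V : Type*} [Fintype V] (G : SimpleGraph V) [DecidableRel G.Adj]
    (S : Finset V)
    (ht : (∑ v ∈ S, (G.degree v : ℤ)) - k * S.card + 2 ≤ (numCompDel G ↑S : ℤ)) :
    2 * (eCard G : ℤ)
      ≤ ((Fintype.card V : ℤ) - S.card - numCompDel G ↑S)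
          * ((Fintype.card V : ℤ) - S.card - numCompDel G ↑S + 1)
        + 2 * (numCompDel G ↑S : ℤ) + 2 * k * S.card - 4 := by
  classical
  have two_mul_eCard : 2 * eCard G = ∑ v, G.degree v := by
    rw [sum_degrees_eq_twice_card_edges, eCard, Nat.card_eq_fintype_card, edgeFinset,
      Set.toFinset_card]
  have card_compl : Fintype.card ((S : Set V)ᶜ : Set V) = Fintype.card V - #S := by
    rw [Fintype.card_compl_set]; simp
  have degree_split := sum_add_sum_compl S fun v => G.degree v
  have degree_compl := G.sum_degree_compl_le S
  have degree_components := (G.induce (S : Set V)ᶜ).sum_degree_le_card_sub_card_connectedComponent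
  rw [card_compl, Nat.cast_sub (card_le_univ S), ← numCompDel] at degree_components
  zify at two_mul_eCard degree_split degree_compl
  linarith

/-- If `S ⊆ V(G)` is nonempty with `t = c(G - S) ≥ 1` and
`t ≥ ∑_{v ∈ S} d_G(v) - ks + 2` where `s = |S|`, then
`2e(G) ≤ (n-s-t)(n-s-t+1) + 2t + 2ks - 4`. -/
theorem two_eCard_le (k : ℕ) (hk : 2 ≤ k)
    {V : Type*} [Fintype V] (G : SimpleGraph V) [DecidableRel G.Adj]
    (S : Finset V) (hS : S.Nonempty) (ht1 : 1 ≤ numCompDel G ↑S)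
    (ht : (∑ v ∈ S, (G.degree v : ℤ)) - k * S.card + 2 ≤ (numCompDel G ↑S : ℤ)) :
    2 * (eCard G : ℤ)
      ≤ ((Fintype.card V : ℤ) - S.card - numCompDel G ↑S)
          * ((Fintype.card V : ℤ) - S.card - numCompDel G ↑S + 1)
        + 2 * (numCompDel G ↑S : ℤ) + 2 * k * S.card - 4 :=
  two_eCard_le_general k G S ht
end
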